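/- arXiv:1802.02644 — 3 statements merged into one kernel-verified Lean document; each statement's English description precedes it below -/
import Mathlib

section
/- Let Q be an irreducible sub-conservative rate matrix on a finite set E, with Perron eigenvalue -λ₀, spectral gap -λ₁ = sup of real parts of other eigenvalues, left eigenvector u (probability) and right eigenvector v (normalized so ∑ u_x v_x = 1), satisfying |e^{λ₀t} ℙ_x(t<τ_∂) - v_x| ≤ C e^{-(λ₁-λ₀)t} and |ℙ_x(X_t = y | t<τ_∂) - u_y| ≤ C e^{-(λ₁-λ₀)t}. Then for all x ∈ E and t ≥ 0, e^{λ₀t} + Ce^{-(λ₁-λ₀)t} - (e^{λ₀t} - 1 + Ce^{-(λ₁-λ₀)t})/u_x ≤ v_x ≤ e^{λ₀t} + Ce^{-(λ₁-λ₀)t}. -/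
/-- under the Perron-Frobenius exponential estimates for an irreducible
sub-conservative finite absorbed Markov chain, with `u` the quasi-stationary
distribution (left eigenvector), `v` the right eigenvector normalized by
`∑ u x * v x = 1`, eigenvalue parameters `0 < λ₀ < λ₁` and constant `C`, one has for
all `x ∈ E` and `t ≥ 0`:
`e^{λ₀t} + Ce^{-(λ₁-λ₀)t} - (e^{λ₀t} - 1 + Ce^{-(λ₁-λ₀)t})/u x ≤ v x ≤ e^{λ₀t} + Ce^{-(λ₁-λ₀)t}`. -/
theorem stmt6
    {E : Type*} [Fintype E] [Nonempty E]
    -- `surv t x = ℙ_x(t < τ_∂)` and `condP t x y = ℙ_x(X_t = y ∣ t < τ_∂)`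
    (surv : ℝ → E → ℝ) (condP : ℝ → E → E → ℝ)
    (hsurv01 : ∀ t x, 0 ≤ t → 0 ≤ surv t x ∧ surv t x ≤ 1)
    (u v : E → ℝ) (hupos : ∀ x, 0 < u x) (hvpos : ∀ x, 0 < v x)
    (hunorm : ∑ x, u x = 1) (huvnorm : ∑ x, u x * v x = 1)
    (lam0 lam1 C : ℝ) (hlam0 : 0 < lam0) (hlam : lam0 < lam1) (hC : 0 < C)
    -- the Perron-Frobenius convergence estimates
    (hcond : ∀ (t : ℝ), 0 ≤ t → ∀ x y : E,
      |condP t x y - u y| ≤ C * Real.exp (-(lam1 - lam0) * t))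
    (heta : ∀ (t : ℝ), 0 ≤ t → ∀ x : E,
      |Real.exp (lam0 * t) * surv t x - v x| ≤ C * Real.exp (-(lam1 - lam0) * t)) :
    ∀ (t : ℝ), 0 ≤ t → ∀ x : E,
      Real.exp (lam0 * t) + C * Real.exp (-(lam1 - lam0) * t)
          - (Real.exp (lam0 * t) - 1 + C * Real.exp (-(lam1 - lam0) * t)) / u x
        ≤ v x
      ∧ v x ≤ Real.exp (lam0 * t) + C * Real.exp (-(lam1 - lam0) * t) := by
  classical
  intro t ht x
  set A := Real.exp (lam0 * t) with hA
  set B := C * Real.exp (-(lam1 - lam0) * t) with hB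
  have hBpos : 0 < B := mul_pos hC (Real.exp_pos _)
  -- upper bound for every y
  have hupper : ∀ y : E, v y ≤ A + B := by
    intro y
    have h := heta t ht y
    rw [abs_le] at h
    have hs := hsurv01 t y ht
    have hApos : 0 < A := Real.exp_pos _
    nlinarith [h.1, h.2, hs.1, hs.2]
  refine ⟨?_, hupper x⟩
  -- lower bound via normalization
  have hsplit : u x * v x + ∑ y ∈ Finset.univ.erase x, u y * v y = 1 := by
    rw [Finset.add_sum_erase Finset.univ (fun y => u y * v y) (Finset.mem_univ x)]; exact huvnorm
  have hsplitu : u x + ∑ y ∈ Finset.univ.erase x, u y = 1 := by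
    rw [Finset.add_sum_erase Finset.univ u (Finset.mem_univ x)]; exact hunorm
  have hsum_le : ∑ y ∈ Finset.univ.erase x, u y * v y
      ≤ ∑ y ∈ Finset.univ.erase x, u y * (A + B) := by
    refine Finset.sum_le_sum fun y _ => ?_
    exact mul_le_mul_of_nonneg_left (hupper y) (hupos y).le
  have hsum_eq : ∑ y ∈ Finset.univ.erase x, u y * (A + B)
      = (1 - u x) * (A + B) := by
    rw [← Finset.sum_mul]
    have : ∑ y ∈ Finset.univ.erase x, u y = 1 - u x := by linarith
    rw [this]
  have key : 1 ≤ u x * v x + (1 - u x) * (A + B) := by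
    nlinarith [hsum_le, hsplit, hsum_eq]
  have hux := hupos x
  rw [sub_le_iff_le_add, ← sub_le_iff_le_add', le_div_iff₀ hux]
  nlinarith [key]
end

section
/- Under the assumptions of the Perron-Frobenius estimates for a finite absorbed Markov chain (with quasi-stationary distribution u, right eigenvector v, eigenvalues λ₀ < λ₁, and constant C such that |ℙ_x(X_t=y|t<τ_∂) - u_y| ≤ Ce^{-(λ₁-λ₀)t} and |e^{λ₀t}ℙ_x(t<τ_∂) - v_x| ≤ Ce^{-(λ₁-λ₀)t}), one has for all x, y ∈ E and t ≥ 0: |ℙ_x(X_t = y) - u_y| ≤ (u_y/u_x)(1 - e^{-λ₀t} + Ce^{-λ₁t}) + Ce^{-λ₁t}(v_x + 2u_y + Ce^{-(λ₁-λ₀)t}). -/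
set_option maxHeartbeats 1000000 in
/-- under the Perron-Frobenius estimates for a finite absorbed Markov
chain (quasi-stationary distribution `u`, right eigenvector `v`, eigenvalues
`λ₀ < λ₁`, constant `C`), the unconditioned law satisfies, for all `x, y ∈ E`, `t ≥ 0`:
`|ℙ_x(X_t = y) - u y| ≤ (u y/u x)(1 - e^{-λ₀t} + Ce^{-λ₁t})
   + Ce^{-λ₁t}(v x + 2 u y + Ce^{-(λ₁-λ₀)t})`. -/
theorem stmt7
    {E : Type*} [Fintype E] [Nonempty E]
    -- `surv t x = ℙ_x(t < τ_∂)`, `condP t x y = ℙ_x(X_t = y ∣ t < τ_∂)`,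
    -- `jointP t x y = ℙ_x(X_t = y)`
    (surv : ℝ → E → ℝ) (condP : ℝ → E → E → ℝ) (jointP : ℝ → E → E → ℝ)
    (hsurv01 : ∀ t x, 0 ≤ t → 0 ≤ surv t x ∧ surv t x ≤ 1)
    (hjoint : ∀ t x y, 0 ≤ t → jointP t x y = condP t x y * surv t x)
    (u v : E → ℝ) (hupos : ∀ x, 0 < u x) (hvpos : ∀ x, 0 < v x)
    (hunorm : ∑ x, u x = 1) (huvnorm : ∑ x, u x * v x = 1)
    (lam0 lam1 C : ℝ) (hlam0 : 0 < lam0) (hlam : lam0 < lam1) (hC : 0 < C)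
    -- the Perron-Frobenius convergence estimates
    (hcond : ∀ (t : ℝ), 0 ≤ t → ∀ x y : E,
      |condP t x y - u y| ≤ C * Real.exp (-(lam1 - lam0) * t))
    (heta : ∀ (t : ℝ), 0 ≤ t → ∀ x : E,
      |Real.exp (lam0 * t) * surv t x - v x| ≤ C * Real.exp (-(lam1 - lam0) * t)) :
    ∀ (t : ℝ), 0 ≤ t → ∀ x y : E,
      |jointP t x y - u y|
        ≤ (u y / u x) * (1 - Real.exp (-(lam0 * t)) + C * Real.exp (-(lam1 * t)))
          + C * Real.exp (-(lam1 * t))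
            * (v x + 2 * u y + C * Real.exp (-(lam1 - lam0) * t)) := by
  intro t ht x y
  classical
  obtain ⟨hP0, hP1⟩ := hsurv01 t x ht
  set a := Real.exp (-(lam0 * t)) with ha
  set b := Real.exp (-(lam1 * t)) with hb
  set q := Real.exp (-(lam1 - lam0) * t) with hq
  have ha0 : 0 < a := Real.exp_pos _
  have hb0 : 0 < b := Real.exp_pos _
  have hq0 : 0 < q := Real.exp_pos _
  have hqa : q * a = b := by rw [ha, hb, hq, ← Real.exp_add]; ring_nf
  have hea : a * Real.exp (lam0 * t) = 1 := by
    rw [ha, ← Real.exp_add]; simp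
  -- bounds on surv t x from heta
  have hsx := abs_le.mp (heta t ht x)
  have hPub : surv t x ≤ a * v x + C * b := by
    have h1 : Real.exp (lam0 * t) * surv t x ≤ v x + C * q := by linarith [hsx.2]
    have h2 := mul_le_mul_of_nonneg_left h1 ha0.le
    have h3 : a * (Real.exp (lam0 * t) * surv t x) = surv t x := by
      rw [← mul_assoc, hea, one_mul]
    have h4 : a * (v x + C * q) = a * v x + C * b := by rw [← hqa]; ring
    linarith
  have hPlb : a * v x - C * b ≤ surv t x := by
    have h1 : v x - C * q ≤ Real.exp (lam0 * t) * surv t x := by linarith [hsx.1]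
    have h2 := mul_le_mul_of_nonneg_left h1 ha0.le
    have h3 : a * (Real.exp (lam0 * t) * surv t x) = surv t x := by
      rw [← mul_assoc, hea, one_mul]
    have h4 : a * (v x - C * q) = a * v x - C * b := by rw [← hqa]; ring
    linarith
  -- upper bound on each v z
  have hvub : ∀ z : E, v z ≤ Real.exp (lam0 * t) + C * q := by
    intro z
    have h1 := (abs_le.mp (heta t ht z)).1
    have h2 := (hsurv01 t z ht).2
    have h3 := mul_le_mul_of_nonneg_left h2 (Real.exp_pos (lam0 * t)).le
    have h4 : Real.exp (lam0 * t) * (1:ℝ) = Real.exp (lam0 * t) := mul_one _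
    linarith
  -- lower bound on u x * v x from the normalization
  have hsum : ∑ z ∈ Finset.univ.erase x, u z * v z
      ≤ (1 - u x) * (Real.exp (lam0 * t) + C * q) := by
    have h1 : ∑ z ∈ Finset.univ.erase x, u z * v z
        ≤ ∑ z ∈ Finset.univ.erase x, u z * (Real.exp (lam0 * t) + C * q) :=
      Finset.sum_le_sum (fun z _ => mul_le_mul_of_nonneg_left (hvub z) (hupos z).le)
    have h2 : ∑ z ∈ Finset.univ.erase x, u z = 1 - u x := by
      have h3 := Finset.sum_erase_add Finset.univ u (Finset.mem_univ x)
      rw [hunorm] at h3; linarith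
    rw [← Finset.sum_mul, h2] at h1
    exact h1
  have hkey : 1 - (1 - u x) * (Real.exp (lam0 * t) + C * q) ≤ u x * v x := by
    have h3 := Finset.sum_erase_add Finset.univ (fun z => u z * v z) (Finset.mem_univ x)
    rw [huvnorm] at h3
    linarith
  have key : u x * (1 - a * v x) ≤ (1 - a) + (1 - u x) * (C * b) := by
    have hmul := mul_le_mul_of_nonneg_left hkey ha0.le
    have h7 : a * (1 - (1 - u x) * (Real.exp (lam0 * t) + C * q))
        = a - (1 - u x) * (1 + C * b) := by
      linear_combination (u x - 1) * hea + (u x - 1) * C * hqa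
    nlinarith [hmul, h7]
  -- main decomposition bound
  have hcxy := abs_le.mp (hcond t ht x y)
  have habs : |jointP t x y - u y| ≤ C * q * surv t x + u y * (1 - surv t x) := by
    rw [hjoint t x y ht, abs_le]
    have hu1 := mul_le_mul_of_nonneg_right hcxy.2 hP0
    have hu2 := mul_le_mul_of_nonneg_right hcxy.1 hP0
    have hu3 : 0 ≤ u y * (1 - surv t x) :=
      mul_nonneg (hupos y).le (by linarith)
    constructor <;> nlinarith [hu1, hu2, hu3]
  have hD : u y / u x * u x = u y := div_mul_cancel₀ (u y) (hupos x).ne'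
  have hD0 : 0 ≤ u y / u x := div_nonneg (hupos y).le (hupos x).le
  calc |jointP t x y - u y| ≤ C * q * surv t x + u y * (1 - surv t x) := habs
    _ ≤ C * q * (a * v x + C * b) + u y * (1 - (a * v x - C * b)) := by
        have t1 := mul_le_mul_of_nonneg_left hPub (mul_nonneg hC.le hq0.le)
        have t2 : u y * (1 - surv t x) ≤ u y * (1 - (a * v x - C * b)) :=
          mul_le_mul_of_nonneg_left (by linarith) (hupos y).le
        linarith
    _ = C * b * v x + C * b * (C * q) + u y * (1 - a * v x) + u y * (C * b) := by
        rw [show C * q * (a * v x + C * b) + u y * (1 - (a * v x - C * b))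
            = C * (q * a) * v x + C * b * (C * q) + u y * (1 - a * v x) + u y * (C * b)
            from by ring, hqa]
    _ ≤ C * b * v x + C * b * (C * q)
          + (u y / u x) * ((1 - a) + (1 - u x) * (C * b)) + u y * (C * b) := by
        have t3 : u y * (1 - a * v x) = (u y / u x) * (u x * (1 - a * v x)) := by
          rw [← mul_assoc, hD]
        have t4 := mul_le_mul_of_nonneg_left key hD0
        linarith
    _ ≤ (u y / u x) * (1 - a + C * b) + C * b * (v x + 2 * u y + C * q) := by
        have t5 : (u y / u x) * u x * (C * b) = u y * (C * b) := by rw [hD]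
        have t6 : 0 ≤ u y * (C * b) :=
          mul_nonneg (hupos y).le (mul_nonneg hC.le hb0.le)
        nlinarith [t5, t6]
end

section
/- Let X be an absorbed Markov process admitting a quasi-stationary distribution α with absorption parameter λ₀, eigenfunction η (∫η dα = 1), and constants C, γ > 0 such that ‖ℙ_μ(X_t∈·|t<τ_∂) - α‖_TV ≤ Ce^{-γt} for all initial μ and |e^{λ₀t}ℙ_x(t<τ_∂) - η(x)| ≤ Ce^{-γt}. Then for all measurable A, B ⊆ E with α(B) > 0 and all t ≥ 0: |ℙ_{α|B}(X_t ∈ A) - α(A)| ≤ (α(A)/α(B))(1 - e^{-λ₀t} + Ce^{-(λ₀+γ)t}) + Ce^{-(λ₀+γ)t}(‖η‖_∞ + 2α(A) + Ce^{-γt}), where α|B(·) = α(· ∩ B)/α(B). -/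
/-!
Write `b = α(B)`, `I = ∫_B ℙ_x(t < τ_∂) dα` and `I_A = ∫_B ℙ_x(X_t ∈ A, t < τ_∂) dα`, so that
`ℙ_{α|B}(X_t ∈ A) = I_A / b`. The total-variation bound for the initial law `α|B` gives
`|I_A - α(A) I| ≤ Ce^{-γt} I`; the eigenfunction estimate gives
`I ≤ e^{-λ₀t}(‖η‖_∞ + Ce^{-γt}) b`; and since `ℙ_α(t < τ_∂) = e^{-λ₀t}`, the mass lost from `B`
by time `t` satisfies `0 ≤ b - I ≤ 1 - e^{-λ₀t}`. Hence
`|I_A - α(A) b| ≤ α(A)(1 - e^{-λ₀t}) + Ce^{-(λ₀+γ)t}(‖η‖_∞ + Ce^{-γt}) b`, and dividing by `b`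
gives a slightly sharper bound than the claimed one.
-/

open MeasureTheory ProbabilityTheory Set Real

lemma abs_sub_mul_le_of_abs_div_sub_le {x y a c : ℝ} (hy : 0 ≤ y) (hxy : y = 0 → x = 0)
    (h : |x / y - a| ≤ c) : |x - a * y| ≤ c * y := by
  rcases hy.eq_or_lt with rfl | hy
  · simp [hxy rfl]
  · calc |x - a * y| = |(x / y - a) * y| := by rw [sub_mul, div_mul_cancel₀ _ hy.ne']
      _ = |x / y - a| * y := by rw [abs_mul, abs_of_pos hy]
      _ ≤ c * y := by gcongr

lemma abs_div_sub_le_of_ratio_bounds {x y a b c e K : ℝ} (hb : 0 < b) (ha : 0 ≤ a)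
    (hy : 0 ≤ y) (hxy : y = 0 → x = 0) (hratio : |x / y - a| ≤ c) (hyb : y ≤ b)
    (hloss : b - y ≤ 1 - e) (hyK : y ≤ e * K * b) :
    |x / b - a| ≤ a / b * (1 - e) + c * e * K := by
  have hc : 0 ≤ c := (abs_nonneg _).trans hratio
  have hx : |x - a * y| ≤ c * y := abs_sub_mul_le_of_abs_div_sub_le hy hxy hratio
  have hab : |a * y - a * b| ≤ a * (1 - e) := by
    rw [← mul_sub, abs_mul, abs_of_nonneg ha, abs_of_nonpos (by linarith)]
    exact mul_le_mul_of_nonneg_left (by linarith) ha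
  have hxb : |x - a * b| ≤ a * (1 - e) + c * e * K * b := by
    calc |x - a * b| ≤ |x - a * y| + |a * y - a * b| := abs_sub_le _ _ _
      _ ≤ c * y + a * (1 - e) := add_le_add hx hab
      _ ≤ a * (1 - e) + c * e * K * b := by nlinarith [mul_le_mul_of_nonneg_left hyK hc]
  calc |x / b - a| = |(x - a * b) / b| := by rw [sub_div, mul_div_cancel_right₀ _ hb.ne']
    _ = |x - a * b| / b := by rw [abs_div, abs_of_pos hb]
    _ ≤ (a * (1 - e) + c * e * K * b) / b := by gcongr
    _ = a / b * (1 - e) + c * e * K := by field_simp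

lemma le_exp_neg_mul_add_of_abs_exp_mul_sub_le {s p h c : ℝ} (hp : |exp s * p - h| ≤ c) :
    p ≤ exp (-s) * (h + c) := by
  calc p = exp (-s) * (exp s * p) := by
        rw [← mul_assoc, ← exp_add, neg_add_cancel, exp_zero, one_mul]
    _ ≤ exp (-s) * (h + c) := by gcongr; linarith [(abs_le.mp hp).2]

section Integrals

variable {E : Type*} [MeasurableSpace E] {μ : Measure E} {f g : E → ℝ} {s : Set E}

lemma integral_eq_zero_of_nonneg_of_le (hf0 : 0 ≤ f) (hfg : f ≤ g) (hg : Integrable g μ)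
    (h : ∫ x, g x ∂μ = 0) : ∫ x, f x ∂μ = 0 := by
  have hg0 : g =ᵐ[μ] 0 := (integral_eq_zero_iff_of_nonneg (hf0.trans hfg) hg).mp h
  have hf : f =ᵐ[μ] 0 := hg0.mono fun x hx => le_antisymm ((hfg x).trans hx.le) (hf0 x)
  rw [integral_congr_ae hf, Pi.zero_def, integral_zero]

lemma integral_cond_div_integral_cond (hs0 : μ s ≠ 0) (hs : μ s ≠ ⊤) :
    (∫ x, f x ∂μ[|s]) / (∫ x, g x ∂μ[|s])
      = (∫ x in s, f x ∂μ) / (∫ x in s, g x ∂μ) := by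
  have hinv : ((μ s)⁻¹).toReal ≠ 0 := ENNReal.toReal_ne_zero.mpr ⟨by simpa, by simpa⟩
  simp only [ProbabilityTheory.cond, integral_smul_measure, smul_eq_mul,
    mul_div_mul_left _ _ hinv]

lemma setIntegral_le_mul_measureReal_of_abs_le {K : ℝ} (hs : μ s ≠ ⊤)
    (h : ∀ x ∈ s, |f x| ≤ K) : ∫ x in s, f x ∂μ ≤ K * μ.real s := by
  have hnorm := norm_setIntegral_le_of_norm_le_const (f := f) hs.lt_top h
  rw [Real.norm_eq_abs] at hnorm
  exact (le_abs_self _).trans hnorm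

lemma measureReal_sub_setIntegral_le [IsProbabilityMeasure μ] (hs : MeasurableSet s)
    (hf : Integrable f μ) (hf1 : ∀ x, |f x| ≤ 1) :
    μ.real s - ∫ x in s, f x ∂μ ≤ 1 - ∫ x, f x ∂μ := by
  have hsplit := integral_add_compl hs hf
  have hcompl :=
    setIntegral_le_mul_measureReal_of_abs_le (measure_ne_top μ sᶜ) fun x _ => hf1 x
  rw [measureReal_compl hs, probReal_univ] at hcompl
  linarith

end Integrals

theorem stmt15_general
    {E : Type*} [MeasurableSpace E]
    (α : Measure E) [IsProbabilityMeasure α]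
    -- `Pt t x A = ℙ_x(X_t ∈ A, t < τ_∂)` for `A ⊆ E`; in particular
    -- `Pt t x univ = ℙ_x(t < τ_∂)`
    (Pt : ℝ → E → Set E → ℝ)
    (hPt01 : ∀ t x A, 0 ≤ t → 0 ≤ Pt t x A ∧ Pt t x A ≤ Pt t x Set.univ ∧
      Pt t x Set.univ ≤ 1)
    (η : E → ℝ)
    -- `‖η‖_∞`
    (ηsup : ℝ) (hηsup : IsLUB (Set.range η) ηsup)
    (lam0 C γ : ℝ)
    -- `α` is the quasi-stationary distribution with absorption parameter `λ₀`
    (hqsdlaw : ∀ (t : ℝ), 0 ≤ t → ∀ A : Set E, MeasurableSet A →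
      ∫ x, Pt t x A ∂α = (α A).toReal * Real.exp (-(lam0 * t)))
    -- total variation convergence of conditional laws, uniform in the initial law `μ`
    (hTV : ∀ (μ : Measure E), IsProbabilityMeasure μ → ∀ (t : ℝ), 0 ≤ t →
      ∀ A : Set E, MeasurableSet A →
      |(∫ x, Pt t x A ∂μ) / (∫ x, Pt t x Set.univ ∂μ) - (α A).toReal|
        ≤ C * Real.exp (-(γ * t)))
    -- the eigenfunction estimate
    (heta : ∀ (t : ℝ), 0 ≤ t → ∀ x : E,
      |Real.exp (lam0 * t) * Pt t x Set.univ - η x| ≤ C * Real.exp (-(γ * t))) :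
    ∀ (B : Set E), MeasurableSet B → 0 < (α B).toReal →
    ∀ (A : Set E), MeasurableSet A → ∀ (t : ℝ), 0 ≤ t →
      |(∫ x in B, Pt t x A ∂α) / (α B).toReal - (α A).toReal|
        ≤ (α A).toReal / (α B).toReal
            * (1 - Real.exp (-(lam0 * t)) + C * Real.exp (-((lam0 + γ) * t)))
          + C * Real.exp (-((lam0 + γ) * t))
            * (ηsup + 2 * (α A).toReal + C * Real.exp (-(γ * t))) := by
  intro B hB hb A hA t ht
  set e := exp (-(lam0 * t))
  set c := C * exp (-(γ * t))
  have hsurv : ∫ x, Pt t x univ ∂α = e := by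
    simpa using hqsdlaw t ht univ MeasurableSet.univ
  -- a non-integrable function would have Bochner integral `0 ≠ e^{-λ₀t}`
  have hsurv_int : Integrable (fun x => Pt t x univ) α :=
    .of_integral_ne_zero (hsurv ▸ (exp_pos _).ne')
  have hsurv_abs : ∀ x, |Pt t x univ| ≤ 1 := fun x =>
    abs_le.mpr ⟨by linarith [(hPt01 t x univ ht).1], (hPt01 t x univ ht).2.2⟩
  have hsurv_le : ∀ x, |Pt t x univ| ≤ e * (ηsup + c) := fun x => by
    rw [abs_of_nonneg (hPt01 t x univ ht).1]
    exact (le_exp_neg_mul_add_of_abs_exp_mul_sub_le (heta t ht x)).trans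
      (by gcongr; exact hηsup.1 ⟨x, rfl⟩)
  have hratio : |(∫ x in B, Pt t x A ∂α) / (∫ x in B, Pt t x univ ∂α) - (α A).toReal| ≤ c := by
    have hαB : α B ≠ 0 := fun h => by simp [h] at hb
    have := hTV _ (cond_isProbabilityMeasure hαB) t ht A hA
    rwa [integral_cond_div_integral_cond hαB (measure_ne_top α B)] at this
  have hI_le (K : ℝ) (hK : ∀ x, |Pt t x univ| ≤ K) :
      ∫ x in B, Pt t x univ ∂α ≤ K * (α B).toReal :=
    setIntegral_le_mul_measureReal_of_abs_le (measure_ne_top α B) fun x _ => hK x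
  have hmain := abs_div_sub_le_of_ratio_bounds (K := ηsup + c) hb ENNReal.toReal_nonneg
    (setIntegral_nonneg hB fun x _ => (hPt01 t x univ ht).1)
    (integral_eq_zero_of_nonneg_of_le (fun x => (hPt01 t x A ht).1)
      (fun x => (hPt01 t x A ht).2.1) hsurv_int.restrict)
    hratio (by simpa using hI_le 1 hsurv_abs)
    (hsurv ▸ measureReal_sub_setIntegral_le hB hsurv_int hsurv_abs)
    (by simpa [mul_assoc, mul_comm] using hI_le _ hsurv_le)
  have hce : C * exp (-((lam0 + γ) * t)) = c * e := by
    rw [mul_assoc, ← exp_add]; ring_nf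
  have hc : 0 ≤ c := (abs_nonneg _).trans hratio
  have hslack : 0 ≤ (α A).toReal / (α B).toReal * (c * e) + c * e * (2 * (α A).toReal) := by
    positivity
  rw [hce]
  linarith

/-- for an absorbed Markov process with quasi-stationary distribution
`α`, absorption parameter `λ₀`, eigenfunction `η` (`∫ η dα = 1`), and constants
`C, γ > 0` with `‖ℙ_μ(X_t∈·∣t<τ_∂) - α‖_TV ≤ Ce^{-γt}` for every initial `μ` and
`|e^{λ₀t}ℙ_x(t<τ_∂) - η(x)| ≤ Ce^{-γt}`, one has for all measurable `A, B ⊆ E` with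
`α(B) > 0` and all `t ≥ 0`:
`|ℙ_{α|B}(X_t ∈ A) - α(A)| ≤ (α(A)/α(B))(1 - e^{-λ₀t} + Ce^{-(λ₀+γ)t})
    + Ce^{-(λ₀+γ)t}(‖η‖_∞ + 2α(A) + Ce^{-γt})`. -/
theorem stmt15
    {E : Type*} [MeasurableSpace E]
    (α : Measure E) [IsProbabilityMeasure α]
    -- `Pt t x A = ℙ_x(X_t ∈ A, t < τ_∂)` for `A ⊆ E`; in particular
    -- `Pt t x univ = ℙ_x(t < τ_∂)`
    (Pt : ℝ → E → Set E → ℝ)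
    (hPt01 : ∀ t x A, 0 ≤ t → 0 ≤ Pt t x A ∧ Pt t x A ≤ Pt t x Set.univ ∧
      Pt t x Set.univ ≤ 1)
    (η : E → ℝ) (hηpos : ∀ x, 0 < η x)
    (hηint : Integrable η α) (hηnorm : ∫ x, η x ∂α = 1)
    -- `‖η‖_∞`
    (ηsup : ℝ) (hηsup : IsLUB (Set.range η) ηsup)
    (lam0 C γ : ℝ) (hlam0 : 0 < lam0) (hC : 0 < C) (hγ : 0 < γ)
    -- `α` is the quasi-stationary distribution with absorption parameter `λ₀`
    (hqsdlaw : ∀ (t : ℝ), 0 ≤ t → ∀ A : Set E, MeasurableSet A →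
      ∫ x, Pt t x A ∂α = (α A).toReal * Real.exp (-(lam0 * t)))
    -- total variation convergence of conditional laws, uniform in the initial law `μ`
    (hTV : ∀ (μ : Measure E), IsProbabilityMeasure μ → ∀ (t : ℝ), 0 ≤ t →
      ∀ A : Set E, MeasurableSet A →
      |(∫ x, Pt t x A ∂μ) / (∫ x, Pt t x Set.univ ∂μ) - (α A).toReal|
        ≤ C * Real.exp (-(γ * t)))
    -- the eigenfunction estimate
    (heta : ∀ (t : ℝ), 0 ≤ t → ∀ x : E,
      |Real.exp (lam0 * t) * Pt t x Set.univ - η x| ≤ C * Real.exp (-(γ * t))) :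
    ∀ (B : Set E), MeasurableSet B → 0 < (α B).toReal →
    ∀ (A : Set E), MeasurableSet A → ∀ (t : ℝ), 0 ≤ t →
      |(∫ x in B, Pt t x A ∂α) / (α B).toReal - (α A).toReal|
        ≤ (α A).toReal / (α B).toReal
            * (1 - Real.exp (-(lam0 * t)) + C * Real.exp (-((lam0 + γ) * t)))
          + C * Real.exp (-((lam0 + γ) * t))
            * (ηsup + 2 * (α A).toReal + C * Real.exp (-(γ * t))) :=
  stmt15_general α Pt hPt01 η ηsup hηsup lam0 C γ hqsdlaw hTV heta
end
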